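/- arXiv:1207.2066 — 4 statements merged into one kernel-verified Lean document; each statement's English description precedes it below -/
import Mathlib

section
/- Let J be a finite index set and let {π^i_j : B_i → B_{ij} = B_{ji}}_{i ≠ j ∈ J} be a family of surjective homomorphisms of unital algebras (over a commutative ring k) that satisfies the cocycle condition, and assume that for each i ∈ J the kernels {ker π^i_j : j ≠ i} generate a distributive sublattice of the lattice of two-sided ideals of B_i. Let B^π be the multi-pullback of the family and let π_i : B^π → B_i be the restriction of the i-th canonical projection. Then for every i ∈ J the map π_i is surjective, so B_i ≅ B^π / ker π_i; moreover, for all distinct i, j ∈ J the map π_{ij} := π^i_j ∘ π_i = π^j_i ∘ π_j : B^π → B_{ij} is surjective and ker π_{ij} = ker π_i + ker π_j, so B_{ij} ≅ B^π / (ker π_i + ker π_j). -/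
/-!
Surjectivity of `π_i` is an extension problem: a family `(b_s)_{s ∈ T}` that is compatible on a
finite set `T` of indices extends to any further index `m`. Lift each `π^s_m(b_s)` to some
`x_s ∈ B_m`; cocycle condition (2) gives `x_s ≡ x_t` modulo `ker π^m_s + ker π^m_t`, and in a
distributive lattice of ideals such pairwise compatible congruences have a common solution
(Chinese remainder theorem), which is the value at `m`. Extending `(b, 0)` from `{i, j}` for
`b ∈ ker π^i_j` in the same way shows `ker π_{ij} ⊆ ker π_i + ker π_j`.
-/

/-!
A family of surjective homomorphisms of unital `k`-algebras
`π^i_j : B_i → B_{ij} = B_{ji}` (`i ≠ j ∈ J`, `J` finite) is encoded as follows: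
for each ordered pair `(i,j)` we have an algebra `C i j` (playing the role of `B_{ij}`)
together with the two maps `π i j : B i →ₐ[k] C i j` (playing `π^i_j`) and
`ρ i j : B j →ₐ[k] C i j` (playing `π^j_i`, viewed in `B_{ij}`); the identification
`B_{ij} = B_{ji}` is expressed by the hypothesis `hsym`, saying that the gluing
constraint determined by `(i,j)` coincides with the one determined by `(j,i)`.
-/

inductive InSublattice {α : Type*} [Lattice α] (S : Set α) : α → Prop
  | base {x : α} : x ∈ S → InSublattice S x
  | inf {x y : α} : InSublattice S x → InSublattice S y → InSublattice S (x ⊓ y)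
  | sup {x y : α} : InSublattice S x → InSublattice S y → InSublattice S (x ⊔ y)

variable (k : Type*) [CommRing k] {J : Type*} (B : J → Type*)
  [∀ i, Ring (B i)] [∀ i, Algebra k (B i)]
  (C : J → J → Type*) [∀ i j, Ring (C i j)] [∀ i j, Algebra k (C i j)]
  (π : ∀ i j, B i →ₐ[k] C i j) (ρ : ∀ i j, B j →ₐ[k] C i j)

/-- The multi-pullback `B^π` of the family, as a subalgebra of `∏_{i ∈ J} B_i`. -/
def multiPullback : Subalgebra k (∀ i, B i) where
  carrier := {b | ∀ i j, i ≠ j → π i j (b i) = ρ i j (b j)}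
  mul_mem' := by
    intro x y hx hy i j hij
    simp only [Pi.mul_apply, map_mul, hx i j hij, hy i j hij]
  one_mem' := by
    intro i j hij
    simp only [Pi.one_apply, map_one]
  add_mem' := by
    intro x y hx hy i j hij
    simp only [Pi.add_apply, map_add, hx i j hij, hy i j hij]
  zero_mem' := by
    intro i j hij
    simp only [Pi.zero_apply, map_zero]
  algebraMap_mem' := by
    intro r i j hij
    simp only [Pi.algebraMap_apply, AlgHom.commutes]

/-- The restriction `π_i : B^π → B_i` of the `i`-th canonical projection. -/
noncomputable def multiPullbackProj (i : J) : multiPullback k B C π ρ →ₐ[k] B i :=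
  (Pi.evalAlgHom k B i).comp (multiPullback k B C π ρ).val

section Lattice

variable {α : Type*} [Lattice α] {S : Set α}
  (hdist : ∀ K L M : α, InSublattice S K → InSublattice S L → InSublattice S M →
      K ⊓ (L ⊔ M) = (K ⊓ L) ⊔ (K ⊓ M))
include hdist

theorem InSublattice.sup_inf_left {K L M : α} (hK : InSublattice S K) (hL : InSublattice S L)
    (hM : InSublattice S M) : K ⊔ L ⊓ M = (K ⊔ L) ⊓ (K ⊔ M) := by
  symm
  calc (K ⊔ L) ⊓ (K ⊔ M) = (K ⊔ L) ⊓ K ⊔ (K ⊔ L) ⊓ M := hdist _ _ _ (hK.sup hL) hK hM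
    _ = K ⊔ (M ⊓ K ⊔ M ⊓ L) := by
        rw [inf_comm _ K, inf_sup_self, inf_comm _ M, hdist M K L hM hK hL]
    _ = K ⊔ L ⊓ M := by rw [← sup_assoc, sup_eq_left.2 (inf_le_right : M ⊓ K ≤ K), inf_comm]

theorem InSublattice.sup_finset_inf' {ι : Type*} {T : Finset ι} (hT : T.Nonempty) {N : α}
    {K : ι → α} (hN : InSublattice S N) (hK : ∀ t ∈ T, InSublattice S (K t)) :
    N ⊔ T.inf' hT K = T.inf' hT (fun t => N ⊔ K t) := by
  induction hT using Finset.Nonempty.cons_induction with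
  | singleton a => simp
  | cons a T ha hT ih =>
    have hKT : ∀ t ∈ T, InSublattice S (K t) := fun t ht => hK t (by simp [ht])
    have hinf : InSublattice S (T.inf' hT K) :=
      Finset.inf'_induction hT K (fun _ h₁ _ h₂ => h₁.inf h₂) hKT
    rw [Finset.inf'_cons hT, Finset.inf'_cons hT, ← ih hKT,
      hN.sup_inf_left hdist (hK a (by simp)) hinf]

end Lattice

namespace TwoSidedIdeal

variable {R : Type*} [Ring R] {S : Set (TwoSidedIdeal R)}
  (hdist : ∀ K L M : TwoSidedIdeal R, InSublattice S K → InSublattice S L → InSublattice S M →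
      K ⊓ (L ⊔ M) = (K ⊓ L) ⊔ (K ⊓ M))
include hdist

theorem exists_sub_mem_of_sub_mem_sup {ι : Type*} (T : Finset ι) {K : ι → TwoSidedIdeal R}
    (hK : ∀ t ∈ T, InSublattice S (K t)) (a : ι → R)
    (ha : ∀ s ∈ T, ∀ t ∈ T, s ≠ t → a s - a t ∈ K s ⊔ K t) :
    ∃ x : R, ∀ t ∈ T, x - a t ∈ K t := by
  classical
  induction T using Finset.induction_on with
  | empty => exact ⟨0, by simp⟩
  | insert n T hn ih =>
    have hKT : ∀ t ∈ T, InSublattice S (K t) := fun t ht => hK t (by simp [ht])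
    obtain ⟨x, hx⟩ := ih hKT fun s hs t ht => ha s (by simp [hs]) t (by simp [ht])
    rcases T.eq_empty_or_nonempty with rfl | hT
    · exact ⟨a n, by simp⟩
    have hnx : a n - x ∈ K n ⊔ T.inf' hT K := by
      rw [(hK n (by simp)).sup_finset_inf' hdist hT hKT]
      refine Finset.inf'_induction hT _ (p := (a n - x ∈ ·))
        (fun _ h₁ _ h₂ => (mem_inf _).2 ⟨h₁, h₂⟩) fun t ht => ?_
      rw [show a n - x = (a n - a t) - (x - a t) by abel]
      exact sub_mem _ (ha n (by simp) t (by simp [ht]) (by rintro rfl; exact hn ht))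
        (mem_sup_right (hx t ht))
    obtain ⟨u, hu, v, hv, huv⟩ := mem_sup.1 hnx
    refine ⟨x + v, Finset.forall_mem_insert _ _ _ |>.2 ⟨?_, fun t ht => ?_⟩⟩
    · rw [show x + v - a n = -u by rw [eq_neg_iff_add_eq_zero, ← sub_eq_zero.2 huv]; abel]
      exact neg_mem _ hu
    · rw [show x + v - a t = (x - a t) + v by abel]
      exact add_mem _ (hx t ht) (Finset.inf'_le K ht hv)

end TwoSidedIdeal

theorem TwoSidedIdeal.exists_algEquiv_quotient_of_ker_eq {R A₁ A₂ : Type*} [CommRing R]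
    [Ring A₁] [Ring A₂] [Algebra R A₁] [Algebra R A₂] (f : A₁ →ₐ[R] A₂)
    (hf : Function.Surjective f) {I : TwoSidedIdeal A₁} (hI : TwoSidedIdeal.ker f = I) :
    ∃ e : I.ringCon.Quotient ≃ₐ[R] A₂, ∀ x, e (I.ringCon.mk' x) = f x := by
  subst hI
  exact ⟨(RingCon.quotientKerEquivRangeₐ f).trans
    ((Subalgebra.equivOfEq _ _ ((AlgHom.range_eq_top f).2 hf)).trans Subalgebra.topEquiv),
    fun _ => rfl⟩

theorem comp_multiPullbackProj_eq {i j : J} (hij : i ≠ j) :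
    (π i j).comp (multiPullbackProj k B C π ρ i) =
      (ρ i j).comp (multiPullbackProj k B C π ρ j) := by
  ext x
  exact x.2 i j hij

section Extension

variable {k B C}

def CompatibleOn (T : Finset J) (b : ∀ j, B j) : Prop :=
  ∀ s ∈ T, ∀ t ∈ T, s ≠ t → π s t (b s) = ρ s t (b t)

variable {π ρ}
  (hρsurj : ∀ i j, i ≠ j → Function.Surjective (ρ i j))
  (hsym : ∀ i j, i ≠ j → ∀ (x : B i) (y : B j),
    π i j x = ρ i j y ↔ π j i y = ρ j i x)
  (hco2 : ∀ i j l, i ≠ j → i ≠ l → j ≠ l →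
    ∀ (a : B i) (b : B j) (c : B l),
    π i j a - ρ i j b ∈ (π i j) '' (TwoSidedIdeal.ker (π i l) : Set (B i)) →
    π j l b - ρ j l c ∈ (π j l) '' (TwoSidedIdeal.ker (π j i) : Set (B j)) →
    π i l a - ρ i l c ∈ (π i l) '' (TwoSidedIdeal.ker (π i j) : Set (B i)))
  (hdist : ∀ i, ∀ K L M : TwoSidedIdeal (B i),
    InSublattice {I | ∃ j, j ≠ i ∧ I = TwoSidedIdeal.ker (π i j)} K →
    InSublattice {I | ∃ j, j ≠ i ∧ I = TwoSidedIdeal.ker (π i j)} L →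
    InSublattice {I | ∃ j, j ≠ i ∧ I = TwoSidedIdeal.ker (π i j)} M →
    K ⊓ (L ⊔ M) = (K ⊓ L) ⊔ (K ⊓ M))

include hsym in
theorem compatibleOn_pair [DecidableEq J] {i j : J} (hij : i ≠ j) {b : ∀ j, B j}
    (h : π i j (b i) = ρ i j (b j)) : CompatibleOn π ρ {i, j} b := by
  intro s hs t ht hst
  simp only [Finset.mem_insert, Finset.mem_singleton] at hs ht
  rcases hs with rfl | rfl <;> rcases ht with rfl | rfl
  · exact absurd rfl hst
  · exact h
  · exact (hsym t s hij _ _).1 h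
  · exact absurd rfl hst

include hρsurj hsym in
theorem exists_local_lifts (m : J) (b : ∀ j, B j) :
    ∃ x : J → B m, ∀ s, s ≠ m → π m s (x s) = ρ m s (b s) := by
  have : ∀ s, ∃ x : B m, s ≠ m → π m s x = ρ m s (b s) := by
    intro s
    by_cases hsm : s = m
    · exact ⟨0, fun h => absurd hsm h⟩
    obtain ⟨x, hx⟩ := hρsurj s m hsm (π s m (b s))
    exact ⟨x, fun _ => (hsym s m hsm _ _).1 hx.symm⟩
  choose x hx using this
  exact ⟨x, hx⟩

include hco2 in
theorem sub_mem_ker_sup_ker_of_lifts {m s t : J} (hms : m ≠ s) (hmt : m ≠ t) (hst : s ≠ t)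
    {x y : B m} {bs : B s} {bt : B t} (hx : π m s x = ρ m s bs) (hy : π m t y = ρ m t bt)
    (hb : π s t bs = ρ s t bt) :
    x - y ∈ TwoSidedIdeal.ker (π m s) ⊔ TwoSidedIdeal.ker (π m t) := by
  have zero_mem_image : ∀ {i j l : J},
      (0 : C i j) ∈ π i j '' (TwoSidedIdeal.ker (π i l) : Set (B i)) :=
    ⟨0, (TwoSidedIdeal.ker _).zero_mem, map_zero _⟩
  obtain ⟨u, hu, hπu⟩ := hco2 m s t hms hmt hst x bs bt
    (by rw [hx, sub_self]; exact zero_mem_image) (by rw [hb, sub_self]; exact zero_mem_image)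
  refine TwoSidedIdeal.mem_sup.2 ⟨u, hu, x - y - u, ?_, by abel⟩
  rw [TwoSidedIdeal.mem_ker, map_sub, map_sub, hπu, hy]
  abel

include hρsurj hsym hco2 hdist in
theorem CompatibleOn.exists_lift {T : Finset J} {b : ∀ j, B j} (hb : CompatibleOn π ρ T b)
    {m : J} (hm : m ∉ T) : ∃ x : B m, ∀ s ∈ T, π m s x = ρ m s (b s) := by
  have hne : ∀ s ∈ T, s ≠ m := fun s hs hsm => hm (hsm ▸ hs)
  obtain ⟨y, hy⟩ := exists_local_lifts hρsurj hsym m b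
  obtain ⟨x, hx⟩ := TwoSidedIdeal.exists_sub_mem_of_sub_mem_sup (hdist m) T
    (K := fun s => TwoSidedIdeal.ker (π m s)) (fun s hs => .base ⟨s, hne s hs, rfl⟩) y
    fun s hs t ht hst => sub_mem_ker_sup_ker_of_lifts hco2 (hne s hs).symm (hne t ht).symm hst
      (hy s (hne s hs)) (hy t (hne t ht)) (hb s hs t ht hst)
  refine ⟨x, fun s hs => ?_⟩
  rw [← hy s (hne s hs), ← sub_eq_zero, ← map_sub]
  exact (TwoSidedIdeal.mem_ker _).1 (hx s hs)

include hsym in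
theorem CompatibleOn.update_insert [DecidableEq J] {T : Finset J} {b : ∀ j, B j}
    (hb : CompatibleOn π ρ T b) {m : J} (hm : m ∉ T) {x : B m}
    (hx : ∀ s ∈ T, π m s x = ρ m s (b s)) :
    CompatibleOn π ρ (insert m T) (Function.update b m x) := by
  have hne : ∀ s ∈ T, s ≠ m := fun s hs hsm => hm (hsm ▸ hs)
  intro s hs t ht hst
  rcases Finset.mem_insert.1 hs with rfl | hsT <;> rcases Finset.mem_insert.1 ht with rfl | htT
  · exact absurd rfl hst
  · rw [Function.update_self, Function.update_of_ne (hne t htT)]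
    exact hx t htT
  · rw [Function.update_self, Function.update_of_ne (hne s hsT)]
    exact (hsym s t hst _ _).2 (hx s hsT)
  · rw [Function.update_of_ne (hne s hsT), Function.update_of_ne (hne t htT)]
    exact hb s hsT t htT hst

include hρsurj hsym hco2 hdist in
theorem CompatibleOn.exists_extend_union [DecidableEq J] {T : Finset J} {b : ∀ j, B j}
    (hb : CompatibleOn π ρ T b) (U : Finset J) :
    ∃ b', CompatibleOn π ρ (U ∪ T) b' ∧ ∀ s ∈ T, b' s = b s := by
  induction U using Finset.induction_on with
  | empty => exact ⟨b, by simpa using hb, fun _ _ => rfl⟩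
  | insert m U _ ih =>
    obtain ⟨b', hb', hb'T⟩ := ih
    rw [Finset.insert_union]
    by_cases hm : m ∈ U ∪ T
    · exact ⟨b', by rwa [Finset.insert_eq_of_mem hm], hb'T⟩
    obtain ⟨x, hx⟩ := hb'.exists_lift hρsurj hsym hco2 hdist hm
    refine ⟨_, hb'.update_insert hsym hm hx, fun s hs => ?_⟩
    rw [Function.update_of_ne (ne_of_mem_of_not_mem (Finset.mem_union_right U hs) hm), hb'T s hs]

include hρsurj hsym hco2 hdist in
theorem CompatibleOn.exists_multiPullback [Finite J] {T : Finset J} {b : ∀ j, B j}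
    (hb : CompatibleOn π ρ T b) :
    ∃ x : multiPullback k B C π ρ, ∀ s ∈ T, multiPullbackProj k B C π ρ s x = b s := by
  classical
  cases nonempty_fintype J
  obtain ⟨b', hb', hb'T⟩ := hb.exists_extend_union hρsurj hsym hco2 hdist Finset.univ
  exact ⟨⟨b', fun i j hij => hb' i (by simp) j (by simp) hij⟩, hb'T⟩

include hρsurj hsym hco2 hdist in
theorem multiPullbackProj_surjective [Finite J] (i : J) :
    Function.Surjective (multiPullbackProj k B C π ρ i) := by
  classical
  intro y
  have hb : CompatibleOn π ρ {i} (Pi.single i y) := by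
    intro s hs t ht hst
    simp_all
  obtain ⟨x, hx⟩ := hb.exists_multiPullback hρsurj hsym hco2 hdist
  exact ⟨x, by simpa using hx i (Finset.mem_singleton_self i)⟩

include hρsurj hsym hco2 hdist in
theorem ker_comp_multiPullbackProj [Finite J] {i j : J} (hij : i ≠ j) :
    TwoSidedIdeal.ker ((π i j).comp (multiPullbackProj k B C π ρ i)) =
      TwoSidedIdeal.ker (multiPullbackProj k B C π ρ i) ⊔
        TwoSidedIdeal.ker (multiPullbackProj k B C π ρ j) := by
  classical
  refine le_antisymm (fun x hx => ?_) (sup_le (fun x hx => ?_) (fun x hx => ?_))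
  · rw [TwoSidedIdeal.mem_ker, AlgHom.comp_apply] at hx
    have hb : CompatibleOn π ρ {i, j} (Pi.single i (multiPullbackProj k B C π ρ i x)) :=
      compatibleOn_pair hsym hij (by simpa [Pi.single_eq_of_ne hij.symm] using hx)
    obtain ⟨v, hv⟩ := hb.exists_multiPullback hρsurj hsym hco2 hdist
    refine TwoSidedIdeal.mem_sup.2 ⟨x - v, ?_, v, ?_, sub_add_cancel x v⟩
    · rw [TwoSidedIdeal.mem_ker, map_sub, hv i (by simp), Pi.single_eq_same, sub_self]
    · rw [TwoSidedIdeal.mem_ker, hv j (by simp), Pi.single_eq_of_ne hij.symm]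
  · rw [TwoSidedIdeal.mem_ker] at hx ⊢
    rw [AlgHom.comp_apply, hx, map_zero]
  · rw [TwoSidedIdeal.mem_ker] at hx ⊢
    rw [comp_multiPullbackProj_eq k B C π ρ hij, AlgHom.comp_apply, hx, map_zero]

end Extension

theorem multiPullback_proj_surjective_and_ker_pair
    [Finite J]
    -- the family consists of epimorphisms:
    (hπsurj : ∀ i j, i ≠ j → Function.Surjective (π i j))
    (hρsurj : ∀ i j, i ≠ j → Function.Surjective (ρ i j))
    -- `B_{ij} = B_{ji}`: the constraints of `(i,j)` and `(j,i)` coincide: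
    (hsym : ∀ i j, i ≠ j → ∀ (x : B i) (y : B j),
      π i j x = ρ i j y ↔ π j i y = ρ j i x)
    -- cocycle condition, part (2): `φ^{il}_j = φ^{ij}_l ∘ φ^{jl}_i`, elementwise:
    (hco2 : ∀ i j l, i ≠ j → i ≠ l → j ≠ l →
      ∀ (a : B i) (b : B j) (c : B l),
      π i j a - ρ i j b ∈ (π i j) '' (TwoSidedIdeal.ker (π i l) : Set (B i)) →
      π j l b - ρ j l c ∈ (π j l) '' (TwoSidedIdeal.ker (π j i) : Set (B j)) →
      π i l a - ρ i l c ∈ (π i l) '' (TwoSidedIdeal.ker (π i j) : Set (B i)))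
    -- the kernels of the `π^i_j` generate a distributive lattice of
    -- two-sided ideals of `B_i`:
    (hdist : ∀ i, ∀ K L M : TwoSidedIdeal (B i),
      InSublattice {I | ∃ j, j ≠ i ∧ I = TwoSidedIdeal.ker (π i j)} K →
      InSublattice {I | ∃ j, j ≠ i ∧ I = TwoSidedIdeal.ker (π i j)} L →
      InSublattice {I | ∃ j, j ≠ i ∧ I = TwoSidedIdeal.ker (π i j)} M →
      K ⊓ (L ⊔ M) = (K ⊓ L) ⊔ (K ⊓ M)) :
    -- each `π_i` is surjective, so `B_i ≅ B^π / ker π_i` ...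
    (∀ i, Function.Surjective (multiPullbackProj k B C π ρ i) ∧
      ∃ e : (TwoSidedIdeal.ker (multiPullbackProj k B C π ρ i)).ringCon.Quotient
              ≃ₐ[k] B i,
        ∀ b : multiPullback k B C π ρ,
          e ((TwoSidedIdeal.ker (multiPullbackProj k B C π ρ i)).ringCon.mk' b) =
            multiPullbackProj k B C π ρ i b) ∧
    -- ... and for distinct `i, j` the map `π_{ij} = π^i_j ∘ π_i = π^j_i ∘ π_j` is a
    -- well-defined surjection whose kernel is `ker π_i + ker π_j`, so that
    -- `B_{ij} ≅ B^π / (ker π_i + ker π_j)`: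
    (∀ i j, i ≠ j →
      ((π i j).comp (multiPullbackProj k B C π ρ i) =
        (ρ i j).comp (multiPullbackProj k B C π ρ j)) ∧
      Function.Surjective ((π i j).comp (multiPullbackProj k B C π ρ i)) ∧
      TwoSidedIdeal.ker ((π i j).comp (multiPullbackProj k B C π ρ i)) =
        TwoSidedIdeal.ker (multiPullbackProj k B C π ρ i) ⊔
          TwoSidedIdeal.ker (multiPullbackProj k B C π ρ j) ∧
      ∃ e : (TwoSidedIdeal.ker (multiPullbackProj k B C π ρ i) ⊔
              TwoSidedIdeal.ker (multiPullbackProj k B C π ρ j)).ringCon.Quotient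
              ≃ₐ[k] C i j,
        ∀ b : multiPullback k B C π ρ,
          e ((TwoSidedIdeal.ker (multiPullbackProj k B C π ρ i) ⊔
              TwoSidedIdeal.ker (multiPullbackProj k B C π ρ j)).ringCon.mk' b) =
            π i j (multiPullbackProj k B C π ρ i b)) := by
  have hsurj := multiPullbackProj_surjective hρsurj hsym hco2 hdist
  refine ⟨fun i => ⟨hsurj i, TwoSidedIdeal.exists_algEquiv_quotient_of_ker_eq _ (hsurj i) rfl⟩,
    fun i j hij => ?_⟩
  have hsurj₂ : Function.Surjective ((π i j).comp (multiPullbackProj k B C π ρ i)) :=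
    (hπsurj i j hij).comp (hsurj i)
  have hker := ker_comp_multiPullbackProj hρsurj hsym hco2 hdist hij
  exact ⟨comp_multiPullbackProj_eq k B C π ρ hij, hsurj₂, hker,
    TwoSidedIdeal.exists_algEquiv_quotient_of_ker_eq _ hsurj₂ hker⟩
end

section
/- Let {π^i_j : B_i → B_{ij} = B_{ji}}_{i ≠ j ∈ {1,2,3}} be a family of surjective homomorphisms of unital algebras satisfying the cocycle condition, such that for each i the kernels {ker π^i_j : j ≠ i} generate a distributive sublattice of ideals of B_i, and such that the kernels I_i := ker π_i of the restricted canonical projections π_i : B^π → B_i generate a distributive sublattice of ideals of the multi-pullback B^π. Set P̃₁ := {(x,y) ∈ B^π/I₁ × B^π/I₂ : x and y have equal images in B^π/(I₁+I₂)}, P̃₂ := {(x,y) ∈ B^π/(I₁+I₃) × B^π/(I₂+I₃) : x and y have equal images in B^π/(I₁+I₂+I₃)}, γ̃ : P̃₁ → P̃₂, γ̃(a+I₁, b+I₂) := (a+I₁+I₃, b+I₂+I₃), δ̃ : B^π/I₃ → P̃₂, δ̃(c+I₃) := (c+I₁+I₃, c+I₂+I₃), and P̃ := {(p, z) ∈ P̃₁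 × B^π/I₃ : γ̃(p) = δ̃(z)}. Then the map B^π → P̃, b ↦ ((b+I₁, b+I₂), b+I₃), is an algebra isomorphism, and the maps γ̃ and δ̃ (and hence all homomorphisms in the iterated pullback diagram) are surjective. -/
def quotFactorHom {B : Type*} [Ring B] {I J : TwoSidedIdeal B} (h : I ≤ J) :
    I.ringCon.Quotient →+* J.ringCon.Quotient where
  toFun := Quotient.map' id (fun _ _ hab => TwoSidedIdeal.ringCon_le_iff.mp h hab)
  map_one' := rfl
  map_mul' := by rintro ⟨x⟩ ⟨y⟩; rfl
  map_zero' := rfl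
  map_add' := by rintro ⟨x⟩ ⟨y⟩; rfl

def quotFactorAlg (k : Type*) [CommRing k] {B : Type*} [Ring B] [Algebra k B]
    {I J : TwoSidedIdeal B} (h : I ≤ J) :
    I.ringCon.Quotient →ₐ[k] J.ringCon.Quotient :=
  { quotFactorHom h with commutes' := fun _ => rfl }

theorem sup_inf_right_of_inSublattice {α : Type*} [Lattice α] {a b c : α}
    (h : ∀ K L M, InSublattice {a, b, c} K → InSublattice {a, b, c} L →
      InSublattice {a, b, c} M → K ⊓ (L ⊔ M) = K ⊓ L ⊔ K ⊓ M) :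
    a ⊓ b ⊔ c = (a ⊔ c) ⊓ (b ⊔ c) := by
  have ha : InSublattice {a, b, c} a := .base (by simp)
  have hb : InSublattice {a, b, c} b := .base (by simp)
  have hc : InSublattice {a, b, c} c := .base (by simp)
  refine le_antisymm (le_inf (sup_le_sup_right inf_le_left c)
    (sup_le_sup_right inf_le_right c)) ?_
  calc (a ⊔ c) ⊓ (b ⊔ c) = (a ⊔ c) ⊓ b ⊔ (a ⊔ c) ⊓ c := h _ _ _ (ha.sup hc) hb hc
    _ = (b ⊓ a ⊔ b ⊓ c) ⊔ (a ⊔ c) ⊓ c := by rw [inf_comm _ b, h _ _ _ hb ha hc]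
    _ ≤ a ⊓ b ⊔ c := by
      rw [inf_comm b a]
      exact sup_le (sup_le_sup_left inf_le_right _) (inf_le_right.trans le_sup_right)

namespace TwoSidedIdeal

variable {R : Type*} [Ring R]

theorem mk'_eq_mk'_iff (I : TwoSidedIdeal R) {a b : R} :
    I.ringCon.mk' a = I.ringCon.mk' b ↔ a - b ∈ I :=
  I.ringCon.eq.trans (I.rel_iff a b)

theorem exists_sub_mem_sub_mem_of_sub_mem_sup {I J : TwoSidedIdeal R} {a b : R}
    (h : a - b ∈ I ⊔ J) : ∃ c, c - a ∈ I ∧ c - b ∈ J := by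
  obtain ⟨i, hi, j, hj, hij⟩ := mem_sup.mp h
  obtain rfl : a = i + j + b := by rw [hij]; abel
  exact ⟨j + b, by simpa using I.neg_mem hi, by simpa using hj⟩

end TwoSidedIdeal

open TwoSidedIdeal

section QuotPullback

variable (k : Type*) [CommRing k] {B : Type*} [Ring B] [Algebra k B]
  {I J L I' J' L' K : TwoSidedIdeal B}

/-- `B/I ×_{B/L} B/J`. -/
def quotPullback (hI : I ≤ L) (hJ : J ≤ L) :
    Subalgebra k (I.ringCon.Quotient × J.ringCon.Quotient) :=
  AlgHom.equalizer ((quotFactorAlg k hI).comp (AlgHom.fst k _ _))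
    ((quotFactorAlg k hJ).comp (AlgHom.snd k _ _))

namespace quotPullback

variable (hI : I ≤ L) (hJ : J ≤ L) (hI' : I' ≤ L') (hJ' : J' ≤ L')

theorem mk'_mem_iff (a b : B) :
    (I.ringCon.mk' a, J.ringCon.mk' b) ∈ quotPullback k hI hJ ↔ a - b ∈ L :=
  L.mk'_eq_mk'_iff

def diag : B →ₐ[k] quotPullback k hI hJ :=
  ((I.ringCon.mkₐ k).prod (J.ringCon.mkₐ k)).codRestrict _ fun _ => rfl

theorem diag_eq_diag_iff {a b : B} : diag k hI hJ a = diag k hI hJ b ↔ a - b ∈ I ⊓ J :=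
  Subtype.ext_iff.trans <| Prod.ext_iff.trans <|
    (and_congr I.mk'_eq_mk'_iff J.mk'_eq_mk'_iff).trans (mem_inf _).symm

theorem diag_surjective (h : L ≤ I ⊔ J) : Function.Surjective (diag k hI hJ) := by
  rintro ⟨⟨x, y⟩, hxy⟩
  obtain ⟨a, rfl⟩ := I.ringCon.mk'_surjective x
  obtain ⟨b, rfl⟩ := J.ringCon.mk'_surjective y
  obtain ⟨c, hca, hcb⟩ :=
    exists_sub_mem_sub_mem_of_sub_mem_sup (h ((mk'_mem_iff k hI hJ a b).mp hxy))
  exact ⟨c, Subtype.ext (Prod.ext (I.mk'_eq_mk'_iff.mpr hca) (J.mk'_eq_mk'_iff.mpr hcb))⟩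

def map (hII' : I ≤ I') (hJJ' : J ≤ J') (hLL' : L ≤ L') :
    quotPullback k hI hJ →ₐ[k] quotPullback k hI' hJ' :=
  (((quotFactorAlg k hII').prodMap (quotFactorAlg k hJJ')).comp
    (Subalgebra.val _)).codRestrict _ (by
      rintro ⟨⟨x, y⟩, hxy⟩
      obtain ⟨a, rfl⟩ := I.ringCon.mk'_surjective x
      obtain ⟨b, rfl⟩ := J.ringCon.mk'_surjective y
      exact (mk'_mem_iff k hI' hJ' a b).mpr (hLL' ((mk'_mem_iff k hI hJ a b).mp hxy)))

theorem map_surjective (hII' : I ≤ I') (hJJ' : J ≤ J') (hLL' : L ≤ L') (h : L' ≤ I' ⊔ J') :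
    Function.Surjective (map k hI hJ hI' hJ' hII' hJJ' hLL') :=
  Function.Surjective.of_comp (g := diag k hI hJ) (diag_surjective k hI' hJ' h)

def quotDiag (hKI : K ≤ I) (hKJ : K ≤ J) : K.ringCon.Quotient →ₐ[k] quotPullback k hI hJ :=
  ((quotFactorAlg k hKI).prod (quotFactorAlg k hKJ)).codRestrict _ (by
    intro z
    obtain ⟨c, rfl⟩ := K.ringCon.mk'_surjective z
    rfl)

theorem quotDiag_surjective (hKI : K ≤ I) (hKJ : K ≤ J) (h : L ≤ I ⊔ J) :
    Function.Surjective (quotDiag k hI hJ hKI hKJ) :=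
  Function.Surjective.of_comp (g := K.ringCon.mk') (diag_surjective k hI hJ h)

end quotPullback

end QuotPullback

section IteratedPullback

variable (k : Type*) [CommRing k] {B : Type*} [Ring B] [Algebra k B]
  (I₁ I₂ I₃ : TwoSidedIdeal B)

/-- `γ̃ : B/I₁ ×_{B/(I₁+I₂)} B/I₂ → B/(I₁+I₃) ×_{B/(I₁+I₂+I₃)} B/(I₂+I₃)`. -/
abbrev iteratedPullback.gamma :=
  quotPullback.map k (le_sup_left : I₁ ≤ I₁ ⊔ I₂) le_sup_right
    (sup_le_sup_right le_sup_left I₃) (sup_le_sup_right le_sup_right I₃)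
    le_sup_left le_sup_left le_sup_left

/-- `δ̃ : B/I₃ → B/(I₁+I₃) ×_{B/(I₁+I₂+I₃)} B/(I₂+I₃)`. -/
abbrev iteratedPullback.delta :=
  quotPullback.quotDiag k (sup_le_sup_right (le_sup_left : I₁ ≤ I₁ ⊔ I₂) I₃)
    (sup_le_sup_right le_sup_right I₃) le_sup_right le_sup_right

/-- `P̃`. -/
abbrev iteratedPullback :=
  AlgHom.equalizer ((iteratedPullback.gamma k I₁ I₂ I₃).comp (AlgHom.fst k _ _))
    ((iteratedPullback.delta k I₁ I₂ I₃).comp (AlgHom.snd k _ _))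

namespace iteratedPullback

theorem gamma_surjective : Function.Surjective (gamma k I₁ I₂ I₃) :=
  quotPullback.map_surjective k _ _ _ _ _ _ _ (sup_sup_distrib_right I₁ I₂ I₃).le

theorem delta_surjective : Function.Surjective (delta k I₁ I₂ I₃) :=
  quotPullback.quotDiag_surjective k _ _ _ _ (sup_sup_distrib_right I₁ I₂ I₃).le

/-- `b ↦ ((b + I₁, b + I₂), b + I₃)`. -/
def lift : B →ₐ[k] iteratedPullback k I₁ I₂ I₃ :=
  ((quotPullback.diag k _ _).prod (I₃.ringCon.mkₐ k)).codRestrict _ fun _ => rfl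

variable {I₁ I₂ I₃}

theorem lift_injective (hbot : I₁ ⊓ I₂ ⊓ I₃ = ⊥) : Function.Injective (lift k I₁ I₂ I₃) := by
  intro x y hxy
  have h₁₂ : x - y ∈ I₁ ⊓ I₂ := (quotPullback.diag_eq_diag_iff k _ _).mp congr($hxy.1.1)
  have h₃ : x - y ∈ I₃ := I₃.mk'_eq_mk'_iff.mp congr($hxy.1.2)
  exact sub_eq_zero.mp ((mem_bot _).mp (hbot ▸ ⟨h₁₂, h₃⟩))

theorem lift_surjective (hdist : (I₁ ⊔ I₃) ⊓ (I₂ ⊔ I₃) ≤ I₁ ⊓ I₂ ⊔ I₃) :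
    Function.Surjective (lift k I₁ I₂ I₃) := by
  rintro ⟨⟨p, z⟩, hpz⟩
  obtain ⟨d, rfl⟩ := quotPullback.diag_surjective k _ _ le_rfl p
  obtain ⟨c, rfl⟩ := I₃.ringCon.mk'_surjective z
  -- both sides of the pullback condition are the diagonal image in `P̃₂`
  have hdc : d - c ∈ (I₁ ⊔ I₃) ⊓ (I₂ ⊔ I₃) := (quotPullback.diag_eq_diag_iff k _ _).mp hpz
  obtain ⟨x, hxd, hxc⟩ := exists_sub_mem_sub_mem_of_sub_mem_sup (hdist hdc)
  exact ⟨x, Subtype.ext (Prod.ext ((quotPullback.diag_eq_diag_iff k _ _).mpr hxd)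
    (I₃.mk'_eq_mk'_iff.mpr hxc))⟩

end iteratedPullback

end IteratedPullback

-- `pij : Bᵢ → Bᵢⱼ` is the map `π^i_j`.
variable (k : Type*) [CommRing k]
  (B₁ B₂ B₃ B₁₂ B₁₃ B₂₃ : Type*)
  [Ring B₁] [Ring B₂] [Ring B₃] [Ring B₁₂] [Ring B₁₃] [Ring B₂₃]
  [Algebra k B₁] [Algebra k B₂] [Algebra k B₃]
  [Algebra k B₁₂] [Algebra k B₁₃] [Algebra k B₂₃]
  (p12 : B₁ →ₐ[k] B₁₂) (p21 : B₂ →ₐ[k] B₁₂)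
  (p13 : B₁ →ₐ[k] B₁₃) (p31 : B₃ →ₐ[k] B₁₃)
  (p23 : B₂ →ₐ[k] B₂₃) (p32 : B₃ →ₐ[k] B₂₃)

/-- The multi-pullback (triple-pullback) `B^π`, as a subalgebra of `B₁ × B₂ × B₃`. -/
def triplePullback : Subalgebra k (B₁ × B₂ × B₃) where
  carrier := {b | p12 b.1 = p21 b.2.1 ∧ p13 b.1 = p31 b.2.2 ∧ p23 b.2.1 = p32 b.2.2}
  mul_mem' := by
    rintro x y ⟨hx1, hx2, hx3⟩ ⟨hy1, hy2, hy3⟩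
    refine ⟨?_, ?_, ?_⟩ <;>
      simp only [Prod.fst_mul, Prod.snd_mul, map_mul, hx1, hx2, hx3, hy1, hy2, hy3]
  one_mem' := by
    refine ⟨?_, ?_, ?_⟩ <;> simp only [Prod.fst_one, Prod.snd_one, map_one]
  add_mem' := by
    rintro x y ⟨hx1, hx2, hx3⟩ ⟨hy1, hy2, hy3⟩
    refine ⟨?_, ?_, ?_⟩ <;>
      simp only [Prod.fst_add, Prod.snd_add, map_add, hx1, hx2, hx3, hy1, hy2, hy3]
  zero_mem' := by
    refine ⟨?_, ?_, ?_⟩ <;> simp only [Prod.fst_zero, Prod.snd_zero, map_zero]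
  algebraMap_mem' := by
    intro r
    refine ⟨?_, ?_, ?_⟩ <;> simp [Prod.algebraMap_apply, AlgHom.commutes]

/-- The restriction `π₁ : B^π → B₁` of the first canonical projection. -/
def tpProj₁ : triplePullback k B₁ B₂ B₃ B₁₂ B₁₃ B₂₃ p12 p21 p13 p31 p23 p32 →ₐ[k] B₁ :=
  (AlgHom.fst k B₁ (B₂ × B₃)).comp
    (triplePullback k B₁ B₂ B₃ B₁₂ B₁₃ B₂₃ p12 p21 p13 p31 p23 p32).val

/-- The restriction `π₂ : B^π → B₂` of the second canonical projection. -/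
def tpProj₂ : triplePullback k B₁ B₂ B₃ B₁₂ B₁₃ B₂₃ p12 p21 p13 p31 p23 p32 →ₐ[k] B₂ :=
  (AlgHom.fst k B₂ B₃).comp ((AlgHom.snd k B₁ (B₂ × B₃)).comp
    (triplePullback k B₁ B₂ B₃ B₁₂ B₁₃ B₂₃ p12 p21 p13 p31 p23 p32).val)

/-- The restriction `π₃ : B^π → B₃` of the third canonical projection. -/
def tpProj₃ : triplePullback k B₁ B₂ B₃ B₁₂ B₁₃ B₂₃ p12 p21 p13 p31 p23 p32 →ₐ[k] B₃ :=
  (AlgHom.snd k B₂ B₃).comp ((AlgHom.snd k B₁ (B₂ × B₃)).comp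
    (triplePullback k B₁ B₂ B₃ B₁₂ B₁₃ B₂₃ p12 p21 p13 p31 p23 p32).val)

theorem inf_ker_tpProj_eq_bot :
    TwoSidedIdeal.ker (tpProj₁ k B₁ B₂ B₃ B₁₂ B₁₃ B₂₃ p12 p21 p13 p31 p23 p32) ⊓
      TwoSidedIdeal.ker (tpProj₂ k B₁ B₂ B₃ B₁₂ B₁₃ B₂₃ p12 p21 p13 p31 p23 p32) ⊓
      TwoSidedIdeal.ker (tpProj₃ k B₁ B₂ B₃ B₁₂ B₁₃ B₂₃ p12 p21 p13 p31 p23 p32) = ⊥ :=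
  eq_bot_iff.mpr fun _ ⟨⟨h₁, h₂⟩, h₃⟩ => (mem_bot _).mpr (Subtype.ext (Prod.ext h₁ (Prod.ext h₂ h₃)))

theorem triplePullback_iso_iterated_pullback
    -- the kernels `I_i = ker π_i` generate a distributive lattice of two-sided
    -- ideals of `B^π`:
    (hdistπ : ∀ K L M :
        TwoSidedIdeal (triplePullback k B₁ B₂ B₃ B₁₂ B₁₃ B₂₃ p12 p21 p13 p31 p23 p32),
      InSublattice
        {TwoSidedIdeal.ker (tpProj₁ k B₁ B₂ B₃ B₁₂ B₁₃ B₂₃ p12 p21 p13 p31 p23 p32),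
         TwoSidedIdeal.ker (tpProj₂ k B₁ B₂ B₃ B₁₂ B₁₃ B₂₃ p12 p21 p13 p31 p23 p32),
         TwoSidedIdeal.ker (tpProj₃ k B₁ B₂ B₃ B₁₂ B₁₃ B₂₃ p12 p21 p13 p31 p23 p32)} K →
      InSublattice
        {TwoSidedIdeal.ker (tpProj₁ k B₁ B₂ B₃ B₁₂ B₁₃ B₂₃ p12 p21 p13 p31 p23 p32),
         TwoSidedIdeal.ker (tpProj₂ k B₁ B₂ B₃ B₁₂ B₁₃ B₂₃ p12 p21 p13 p31 p23 p32),
         TwoSidedIdeal.ker (tpProj₃ k B₁ B₂ B₃ B₁₂ B₁₃ B₂₃ p12 p21 p13 p31 p23 p32)} L →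
      InSublattice
        {TwoSidedIdeal.ker (tpProj₁ k B₁ B₂ B₃ B₁₂ B₁₃ B₂₃ p12 p21 p13 p31 p23 p32),
         TwoSidedIdeal.ker (tpProj₂ k B₁ B₂ B₃ B₁₂ B₁₃ B₂₃ p12 p21 p13 p31 p23 p32),
         TwoSidedIdeal.ker (tpProj₃ k B₁ B₂ B₃ B₁₂ B₁₃ B₂₃ p12 p21 p13 p31 p23 p32)} M →
      K ⊓ (L ⊔ M) = (K ⊓ L) ⊔ (K ⊓ M)) :
    -- Conclusion.  Writing `I₁, I₂, I₃` for the kernels of the projections,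
    -- `Q I` for the quotient `B^π/I`, `P̃₁` and `P̃₂` for the two pullbacks of
    -- quotients, there are algebra maps `γ̃ : P̃₁ → P̃₂`, `δ̃ : B^π/I₃ → P̃₂` given by
    -- the canonical quotient maps, both surjective, such that the canonical map
    -- `b ↦ ((b + I₁, b + I₂), b + I₃)` is an algebra isomorphism from `B^π` onto
    -- the pullback `P̃ = {(p, z) ∈ P̃₁ × B^π/I₃ : γ̃(p) = δ̃(z)}`.
    letI Bπ := triplePullback k B₁ B₂ B₃ B₁₂ B₁₃ B₂₃ p12 p21 p13 p31 p23 p32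
    letI I₁ := TwoSidedIdeal.ker (tpProj₁ k B₁ B₂ B₃ B₁₂ B₁₃ B₂₃ p12 p21 p13 p31 p23 p32)
    letI I₂ := TwoSidedIdeal.ker (tpProj₂ k B₁ B₂ B₃ B₁₂ B₁₃ B₂₃ p12 p21 p13 p31 p23 p32)
    letI I₃ := TwoSidedIdeal.ker (tpProj₃ k B₁ B₂ B₃ B₁₂ B₁₃ B₂₃ p12 p21 p13 p31 p23 p32)
    letI P₁ := AlgHom.equalizer
      ((quotFactorAlg k (le_sup_left : I₁ ≤ I₁ ⊔ I₂)).comp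
        (AlgHom.fst k I₁.ringCon.Quotient I₂.ringCon.Quotient))
      ((quotFactorAlg k (le_sup_right : I₂ ≤ I₁ ⊔ I₂)).comp
        (AlgHom.snd k I₁.ringCon.Quotient I₂.ringCon.Quotient))
    letI P₂ := AlgHom.equalizer
      ((quotFactorAlg k (sup_le_sup_right le_sup_left I₃ : I₁ ⊔ I₃ ≤ (I₁ ⊔ I₂) ⊔ I₃)).comp
        (AlgHom.fst k (I₁ ⊔ I₃).ringCon.Quotient (I₂ ⊔ I₃).ringCon.Quotient))
      ((quotFactorAlg k (sup_le_sup_right le_sup_right I₃ : I₂ ⊔ I₃ ≤ (I₁ ⊔ I₂) ⊔ I₃)).comp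
        (AlgHom.snd k (I₁ ⊔ I₃).ringCon.Quotient (I₂ ⊔ I₃).ringCon.Quotient))
    ∃ (γ : P₁ →ₐ[k] P₂) (δ : I₃.ringCon.Quotient →ₐ[k] P₂),
      -- `γ̃(a + I₁, b + I₂) = (a + I₁ + I₃, b + I₂ + I₃)`:
      (∀ (p : P₁) (a b : Bπ),
        (p : I₁.ringCon.Quotient × I₂.ringCon.Quotient) =
          (I₁.ringCon.mk' a, I₂.ringCon.mk' b) →
        ((γ p : (I₁ ⊔ I₃).ringCon.Quotient × (I₂ ⊔ I₃).ringCon.Quotient) =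
          ((I₁ ⊔ I₃).ringCon.mk' a, (I₂ ⊔ I₃).ringCon.mk' b))) ∧
      -- `δ̃(c + I₃) = (c + I₁ + I₃, c + I₂ + I₃)`:
      (∀ c : Bπ,
        ((δ (I₃.ringCon.mk' c) : (I₁ ⊔ I₃).ringCon.Quotient ×
            (I₂ ⊔ I₃).ringCon.Quotient) =
          ((I₁ ⊔ I₃).ringCon.mk' c, (I₂ ⊔ I₃).ringCon.mk' c))) ∧
      -- `γ̃` and `δ̃` are surjective:
      Function.Surjective γ ∧ Function.Surjective δ ∧
      -- the canonical map is an algebra isomorphism onto the pullback `P̃`: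
      ∃ e : Bπ ≃ₐ[k] AlgHom.equalizer
          (γ.comp (AlgHom.fst k P₁ I₃.ringCon.Quotient))
          (δ.comp (AlgHom.snd k P₁ I₃.ringCon.Quotient)),
        ∀ b : Bπ,
          (((e b : P₁ × I₃.ringCon.Quotient).1 :
              I₁.ringCon.Quotient × I₂.ringCon.Quotient) =
            (I₁.ringCon.mk' b, I₂.ringCon.mk' b)) ∧
          ((e b : P₁ × I₃.ringCon.Quotient).2 = I₃.ringCon.mk' b) := by
  refine ⟨iteratedPullback.gamma k _ _ _, iteratedPullback.delta k _ _ _, ?_, fun _ => rfl,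
    iteratedPullback.gamma_surjective k _ _ _, iteratedPullback.delta_surjective k _ _ _,
    AlgEquiv.ofBijective (iteratedPullback.lift k _ _ _)
      ⟨iteratedPullback.lift_injective k (inf_ker_tpProj_eq_bot ..),
        iteratedPullback.lift_surjective k (sup_inf_right_of_inSublattice hdistπ).ge⟩,
    fun _ => ⟨rfl, rfl⟩⟩
  rintro ⟨_, _⟩ a b rfl
  rfl
end

section
/- Let B be a unital ring and let I₁, I₂, I₃ be two-sided ideals of B. Define P₁ := {(x,y) ∈ B/I₁ × B/I₂ : x and y have equal images in B/(I₁+I₂)} and P₂ := {(x,y) ∈ B/(I₁+I₃) × B/(I₂+I₃) : x and y have equal images in B/(I₁+I₂+I₃)}. Then the map γ̃ : P₁ → P₂ given by γ̃(a + I₁, b + I₂) := (a + (I₁+I₃), b + (I₂+I₃)) is well defined and surjective: for every (x, y) ∈ P₂ there exist α ∈ B and β ∈ B with α − β ∈ I₁ + I₂, α + (I₁+I₃) = x, and β + (I₂+I₃) = y. -/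
namespace TwoSidedIdeal

variable {B : Type*} [Ring B]

theorem ringCon_mk'_eq_iff (I : TwoSidedIdeal B) (a b : B) :
    I.ringCon.mk' a = I.ringCon.mk' b ↔ a - b ∈ I :=
  (RingCon.eq _).trans (I.rel_iff a b)

theorem exists_sub_mem_of_sub_mem_sup_s6 {J K : TwoSidedIdeal B} {b c : B} (h : b - c ∈ J ⊔ K) :
    ∃ β, b - β ∈ J ∧ β - c ∈ K := by
  obtain ⟨u, hu, v, hv, huv⟩ := mem_sup.mp h
  refine ⟨b - u, by simpa using hu, ?_⟩
  convert hv using 1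
  rw [sub_right_comm, ← huv, add_sub_cancel_left]

end TwoSidedIdeal

section QuotPullback

open TwoSidedIdeal

variable {B : Type*} [Ring B]

theorem quotFactorHom_mk {I J : TwoSidedIdeal B} (h : I ≤ J) (a : B) :
    quotFactorHom h (I.ringCon.mk' a) = J.ringCon.mk' a := rfl

theorem quotFactorHom_quotFactorHom {I J K : TwoSidedIdeal B} (hIJ : I ≤ J) (hJK : J ≤ K)
    (x : I.ringCon.Quotient) :
    quotFactorHom hJK (quotFactorHom hIJ x) = quotFactorHom (hIJ.trans hJK) x := by
  obtain ⟨a, rfl⟩ := I.ringCon.mk'_surjective x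
  rfl

/-- The fibre product `B/I ×_{B/K} B/J`; the paper's `P₁` and `P₂` are of this form. -/
abbrev QuotPullback {I J K : TwoSidedIdeal B} (hI : I ≤ K) (hJ : J ≤ K) :=
  {p : I.ringCon.Quotient × J.ringCon.Quotient // quotFactorHom hI p.1 = quotFactorHom hJ p.2}

variable {I J K I' J' K' : TwoSidedIdeal B} {hI : I ≤ K} {hJ : J ≤ K} {hI' : I' ≤ K'}
  {hJ' : J' ≤ K'}

theorem QuotPullback.mk'_mem_iff (a b : B) :
    quotFactorHom hI (I.ringCon.mk' a) = quotFactorHom hJ (J.ringCon.mk' b) ↔ a - b ∈ K :=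
  K.ringCon_mk'_eq_iff a b

def QuotPullback.map (hII' : I ≤ I') (hJJ' : J ≤ J') (hKK' : K ≤ K') :
    QuotPullback hI hJ → QuotPullback hI' hJ' :=
  fun p => ⟨(quotFactorHom hII' p.val.1, quotFactorHom hJJ' p.val.2), by
    simp only [quotFactorHom_quotFactorHom]
    rw [← quotFactorHom_quotFactorHom hI hKK', ← quotFactorHom_quotFactorHom hJ hKK', p.2]⟩

theorem QuotPullback.map_val_of_val_eq_mk' (hII' : I ≤ I') (hJJ' : J ≤ J') (hKK' : K ≤ K')
    (p : QuotPullback hI hJ) {a b : B} (hp : p.val = (I.ringCon.mk' a, J.ringCon.mk' b)) :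
    (QuotPullback.map (hI' := hI') (hJ' := hJ') hII' hJJ' hKK' p).val =
      (I'.ringCon.mk' a, J'.ringCon.mk' b) := by
  simp only [QuotPullback.map, hp, quotFactorHom_mk]

theorem QuotPullback.exists_mk'_eq_of_sup (I₁ I₂ I₃ : TwoSidedIdeal B)
    (q : QuotPullback (sup_le_sup_right le_sup_left I₃ : I₁ ⊔ I₃ ≤ (I₁ ⊔ I₂) ⊔ I₃)
      (sup_le_sup_right le_sup_right I₃ : I₂ ⊔ I₃ ≤ (I₁ ⊔ I₂) ⊔ I₃)) :
    ∃ α β : B, α - β ∈ I₁ ⊔ I₂ ∧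
      (I₁ ⊔ I₃).ringCon.mk' α = q.val.1 ∧ (I₂ ⊔ I₃).ringCon.mk' β = q.val.2 := by
  obtain ⟨⟨x, y⟩, hq⟩ := q
  obtain ⟨b, rfl⟩ := (I₁ ⊔ I₃).ringCon.mk'_surjective x
  obtain ⟨c, rfl⟩ := (I₂ ⊔ I₃).ringCon.mk'_surjective y
  obtain ⟨β, hbβ, hβc⟩ := exists_sub_mem_of_sub_mem_sup_s6 ((QuotPullback.mk'_mem_iff b c).mp hq)
  exact ⟨b, β, hbβ, rfl, ((I₂ ⊔ I₃).ringCon_mk'_eq_iff β c).mpr (mem_sup_right hβc)⟩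

end QuotPullback

/-- surjectivity of `γ̃`, from the proof of Proposition 1.3 of the
paper.  For a unital ring `B` with two-sided ideals `I₁, I₂, I₃`, the map
`γ̃ : P₁ → P₂`, `γ̃(a + I₁, b + I₂) = (a + (I₁+I₃), b + (I₂+I₃))`, is well defined
and surjective, where
`P₁ = {(x,y) ∈ B/I₁ × B/I₂ : x, y have equal images in B/(I₁+I₂)}` and
`P₂ = {(x,y) ∈ B/(I₁+I₃) × B/(I₂+I₃) : x, y have equal images in B/(I₁+I₂+I₃)}`;
explicitly, for every `(x,y) ∈ P₂` there exist `α, β ∈ B` with `α - β ∈ I₁ + I₂`,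
`α + (I₁+I₃) = x` and `β + (I₂+I₃) = y`. -/
theorem gammaTilde_wellDefined_surjective
    (B : Type*) [Ring B] (I₁ I₂ I₃ : TwoSidedIdeal B) :
    ∃ γ : {p : I₁.ringCon.Quotient × I₂.ringCon.Quotient //
          quotFactorHom (le_sup_left : I₁ ≤ I₁ ⊔ I₂) p.1 =
          quotFactorHom (le_sup_right : I₂ ≤ I₁ ⊔ I₂) p.2} →
        {p : (I₁ ⊔ I₃).ringCon.Quotient × (I₂ ⊔ I₃).ringCon.Quotient //
          quotFactorHom (sup_le_sup_right le_sup_left I₃ :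
            I₁ ⊔ I₃ ≤ (I₁ ⊔ I₂) ⊔ I₃) p.1 =
          quotFactorHom (sup_le_sup_right le_sup_right I₃ :
            I₂ ⊔ I₃ ≤ (I₁ ⊔ I₂) ⊔ I₃) p.2},
      -- `γ̃` is given on representatives by `(a + I₁, b + I₂) ↦ (a + (I₁+I₃), b + (I₂+I₃))`:
      (∀ p (a b : B), p.val = (I₁.ringCon.mk' a, I₂.ringCon.mk' b) →
        (γ p).val = ((I₁ ⊔ I₃).ringCon.mk' a, (I₂ ⊔ I₃).ringCon.mk' b)) ∧
      -- `γ̃` is surjective: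
      Function.Surjective γ ∧
      -- explicitly:
      (∀ q : {p : (I₁ ⊔ I₃).ringCon.Quotient × (I₂ ⊔ I₃).ringCon.Quotient //
          quotFactorHom (sup_le_sup_right le_sup_left I₃ :
            I₁ ⊔ I₃ ≤ (I₁ ⊔ I₂) ⊔ I₃) p.1 =
          quotFactorHom (sup_le_sup_right le_sup_right I₃ :
            I₂ ⊔ I₃ ≤ (I₁ ⊔ I₂) ⊔ I₃) p.2},
        ∃ α β : B, α - β ∈ I₁ ⊔ I₂ ∧
          (I₁ ⊔ I₃).ringCon.mk' α = q.val.1 ∧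
          (I₂ ⊔ I₃).ringCon.mk' β = q.val.2) := by
  refine ⟨QuotPullback.map le_sup_left le_sup_left le_sup_left,
    fun p _ _ hp => QuotPullback.map_val_of_val_eq_mk' _ _ _ p hp,
    fun q => ?_, QuotPullback.exists_mk'_eq_of_sup I₁ I₂ I₃⟩
  obtain ⟨α, β, hαβ, hα, hβ⟩ := QuotPullback.exists_mk'_eq_of_sup I₁ I₂ I₃ q
  let p : QuotPullback (le_sup_left : I₁ ≤ I₁ ⊔ I₂) le_sup_right :=
    ⟨(I₁.ringCon.mk' α, I₂.ringCon.mk' β), (QuotPullback.mk'_mem_iff α β).mpr hαβ⟩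
  exact ⟨p, Subtype.ext ((QuotPullback.map_val_of_val_eq_mk' _ _ _ p rfl).trans (Prod.ext hα hβ))⟩
end

section
/- Let {π^i_j : B_i → B_{ij} = B_{ji}}_{i ≠ j ∈ {1,2,3}} be a family of surjective homomorphisms of unital algebras satisfying the cocycle condition, such that for each i the kernels {ker π^i_j : j ≠ i} generate a distributive sublattice of ideals of B_i, and such that the kernels I_i := ker π_i of the restricted canonical projections π_i : B^π → B_i generate a distributive sublattice of ideals of the multi-pullback B^π. Then: (i) the maps π₁₃ := π^1_3 ∘ π₁ : B^π → B₁₃ and π₂₃ := π^2_3 ∘ π₂ : B^π → B₂₃ are surjective; (ii) there are well-defined surjective homomorphisms η¹ : B₁₃ → B^π/(I₁+I₂+I₃) and η² : B₂₃ → B^π/(I₁+I₂+I₃) given by η^i(b) := b̃ + (I₁+I₂+I₃) for any b̃ ∈ B^π with π^i_3(π_i(b̃)) = b, i.e. the value is independent of the choice of the lift b̃; and (iii) η¹ ∘ π₁₃ = η² ∘ π₂₃ is the canonical quotient map B^π → B^π/(I₁+I₂+I₃). -/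
set_option synthInstance.maxHeartbeats 1000000
set_option maxHeartbeats 1000000

variable (k : Type*) [CommRing k]
  (B₁ B₂ B₃ B₁₂ B₁₃ B₂₃ : Type*)
  [Ring B₁] [Ring B₂] [Ring B₃] [Ring B₁₂] [Ring B₁₃] [Ring B₂₃]
  [Algebra k B₁] [Algebra k B₂] [Algebra k B₃]
  [Algebra k B₁₂] [Algebra k B₁₃] [Algebra k B₂₃]
  (p12 : B₁ →ₐ[k] B₁₂) (p21 : B₂ →ₐ[k] B₁₂)
  (p13 : B₁ →ₐ[k] B₁₃) (p31 : B₃ →ₐ[k] B₁₃)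
  (p23 : B₂ →ₐ[k] B₂₃) (p32 : B₃ →ₐ[k] B₂₃)

/-!
Any `b₁ ∈ B₁` completes to an element of `B^π`: lift `π^1_2(b₁)` to `b₂ ∈ B₂` and `π^1_3(b₁)` to
`c₃ ∈ B₃`; condition (2) puts the mismatch `π^2_3(b₂) - π^3_2(c₃)` into `π^2_3(ker π^2_1)`, which
by (1) is `π^3_2(ker π^3_1)`, so correcting `c₃` by an element of `ker π^3_1` repairs it. Hence
`π₁`, `π₂`, and with them `π₁₃`, `π₂₃`, are surjective.

If `b = (b₁, b₂, b₃) ∈ B^π` has `π^1_3(b₁) = 0`, condition (1) gives `w₂ ∈ ker π^2_3` with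
`π^2_1(w₂) = π^1_2(b₁)`, so `w = (b₁, w₂, 0) ∈ I₃` and `b - w ∈ I₁`. Thus `ker π₁₃ ≤ I₁ + I₃`,
likewise `ker π₂₃ ≤ I₂ + I₃`, and the quotient map of `B^π` by `I₁ + I₂ + I₃` descends along
`π₁₃` and `π₂₃`.
-/

open Function TwoSidedIdeal

section Descend

variable {R A B C : Type*} [CommRing R] [Ring A] [Ring B] [Ring C]
  [Algebra R A] [Algebra R B] [Algebra R C]

noncomputable def RingCon.quotientKerAlgEquivOfSurjective (f : A →ₐ[R] B) (hf : Surjective f) :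
    (RingCon.ker f.toRingHom).Quotient ≃ₐ[R] B :=
  AlgEquiv.ofBijective (RingCon.kerLiftₐ f)
    ⟨RingCon.kerLiftₐ_injective f, fun b ↦ (hf b).imp' RingCon.toQuotient fun _ ha ↦ ha⟩

namespace AlgHom

/-- `AlgHom.liftOfSurjective` without the commutativity assumptions. -/
noncomputable def descendOfSurjective (f : A →ₐ[R] B) (hf : Surjective f) (g : A →ₐ[R] C)
    (H : ker f ≤ ker g) : B →ₐ[R] C :=
  (RingCon.liftₐ _ g (ringCon_le_iff.mp H)).comp
    (RingCon.quotientKerAlgEquivOfSurjective f hf).symm.toAlgHom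

variable (f : A →ₐ[R] B) (hf : Surjective f) (g : A →ₐ[R] C) (H : ker f ≤ ker g)

theorem descendOfSurjective_apply (a : A) : f.descendOfSurjective hf g H (f a) = g a := by
  have hsymm : (RingCon.quotientKerAlgEquivOfSurjective f hf).symm (f a) = a :=
    (AlgEquiv.symm_apply_eq _).2 rfl
  exact congrArg (RingCon.liftₐ _ g (ringCon_le_iff.mp H)) hsymm

theorem descendOfSurjective_surjective (hg : Surjective g) :
    Surjective (f.descendOfSurjective hf g H) := fun c ↦
  let ⟨a, ha⟩ := hg c
  ⟨f a, (descendOfSurjective_apply f hf g H a).trans ha⟩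

end AlgHom

end Descend

theorem exists_compatible_lift_of_cocycle {R Bi Bj Bk Bij Bik Bjk : Type*} [CommRing R]
    [Ring Bi] [Ring Bj] [Ring Bk] [Ring Bij] [Ring Bik] [Ring Bjk]
    [Algebra R Bi] [Algebra R Bj] [Algebra R Bk] [Algebra R Bij] [Algebra R Bik] [Algebra R Bjk]
    {pij : Bi →ₐ[R] Bij} {pji : Bj →ₐ[R] Bij} {pik : Bi →ₐ[R] Bik} {pki : Bk →ₐ[R] Bik}
    {pjk : Bj →ₐ[R] Bjk} {pkj : Bk →ₐ[R] Bjk} (hji : Surjective pji) (hki : Surjective pki)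
    (hco₁ : pjk '' (ker pji : Set Bj) = pkj '' (ker pki : Set Bk))
    (hco₂ : ∀ ai aj ak, pji aj - pij ai ∈ pji '' (ker pjk : Set Bj) →
      pik ai - pki ak ∈ pik '' (ker pij : Set Bi) → pjk aj - pkj ak ∈ pjk '' (ker pji : Set Bj))
    (bi : Bi) : ∃ bj bk, pij bi = pji bj ∧ pik bi = pki bk ∧ pjk bj = pkj bk := by
  obtain ⟨bj, hbj⟩ := hji (pij bi)
  obtain ⟨ck, hck⟩ := hki (pik bi)
  have hmismatch : pjk bj - pkj ck ∈ pkj '' (ker pki : Set Bk) := hco₁ ▸ hco₂ bi bj ck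
    ⟨0, (ker _).zero_mem, by rw [map_zero, hbj, sub_self]⟩
    ⟨0, (ker _).zero_mem, by rw [map_zero, hck, sub_self]⟩
  obtain ⟨dk, hdk, hd⟩ := hmismatch
  refine ⟨bj, ck + dk, hbj.symm, ?_, ?_⟩
  · rw [map_add, (mem_ker _).1 hdk, add_zero, hck]
  · rw [map_add, hd, add_sub_cancel]

section TriplePullback

variable {k B₁ B₂ B₃ B₁₂ B₁₃ B₂₃ p12 p21 p13 p31 p23 p32}

local notation "π₁" => tpProj₁ k B₁ B₂ B₃ B₁₂ B₁₃ B₂₃ p12 p21 p13 p31 p23 p32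
local notation "π₂" => tpProj₂ k B₁ B₂ B₃ B₁₂ B₁₃ B₂₃ p12 p21 p13 p31 p23 p32
local notation "π₃" => tpProj₃ k B₁ B₂ B₃ B₁₂ B₁₃ B₂₃ p12 p21 p13 p31 p23 p32

theorem tpProj₁_surjective (h21 : Surjective p21) (h31 : Surjective p31)
    (hco1c : p23 '' (ker p21 : Set B₂) = p32 '' (ker p31 : Set B₃))
    (hco2c : ∀ (a₁ : B₁) (a₂ : B₂) (a₃ : B₃),
      p21 a₂ - p12 a₁ ∈ p21 '' (ker p23 : Set B₂) → p13 a₁ - p31 a₃ ∈ p13 '' (ker p12 : Set B₁) →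
      p23 a₂ - p32 a₃ ∈ p23 '' (ker p21 : Set B₂)) :
    Surjective π₁ := fun b₁ ↦
  let ⟨b₂, b₃, h₁₂, h₁₃, h₂₃⟩ := exists_compatible_lift_of_cocycle h21 h31 hco1c hco2c b₁
  ⟨⟨(b₁, b₂, b₃), h₁₂, h₁₃, h₂₃⟩, rfl⟩

theorem tpProj₂_surjective (h12 : Surjective p12) (h32 : Surjective p32)
    (hco1b : p13 '' (ker p12 : Set B₁) = p31 '' (ker p32 : Set B₃))
    (hco2a : ∀ (a₁ : B₁) (a₂ : B₂) (a₃ : B₃),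
      p12 a₁ - p21 a₂ ∈ p12 '' (ker p13 : Set B₁) → p23 a₂ - p32 a₃ ∈ p23 '' (ker p21 : Set B₂) →
      p13 a₁ - p31 a₃ ∈ p13 '' (ker p12 : Set B₁)) :
    Surjective π₂ := fun b₂ ↦
  let ⟨b₁, b₃, h₂₁, h₂₃, h₁₃⟩ :=
    exists_compatible_lift_of_cocycle h12 h32 hco1b (fun a₂ a₁ a₃ ↦ hco2a a₁ a₂ a₃) b₂
  ⟨⟨(b₁, b₂, b₃), h₂₁.symm, h₁₃, h₂₃⟩, rfl⟩

theorem ker_comp_tpProj₁_le (hco1a : p12 '' (ker p13 : Set B₁) = p21 '' (ker p23 : Set B₂)) :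
    ker (p13.comp π₁) ≤ ker π₁ ⊔ ker π₃ := fun b hb ↦ by
  replace hb : p13 (π₁ b) = 0 := (mem_ker _).1 hb
  obtain ⟨w₂, hw₂, h₁₂⟩ : p12 (π₁ b) ∈ p21 '' (ker p23 : Set B₂) :=
    hco1a ▸ ⟨_, (mem_ker _).2 hb, rfl⟩
  let w : triplePullback k B₁ B₂ B₃ B₁₂ B₁₃ B₂₃ p12 p21 p13 p31 p23 p32 :=
    ⟨(π₁ b, w₂, 0), h₁₂.symm, by rw [hb, map_zero], by rw [(mem_ker _).1 hw₂, map_zero]⟩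
  have hbw : b - w ∈ ker π₁ := (mem_ker _).2 (by rw [map_sub, sub_eq_zero]; rfl)
  have hw₃ : w ∈ ker π₃ := (mem_ker _).2 rfl
  simpa using add_mem (mem_sup_left hbw) (mem_sup_right hw₃)

theorem ker_comp_tpProj₂_le (hco1a : p12 '' (ker p13 : Set B₁) = p21 '' (ker p23 : Set B₂)) :
    ker (p23.comp π₂) ≤ ker π₂ ⊔ ker π₃ := fun b hb ↦ by
  replace hb : p23 (π₂ b) = 0 := (mem_ker _).1 hb
  obtain ⟨w₁, hw₁, h₁₂⟩ : p21 (π₂ b) ∈ p12 '' (ker p13 : Set B₁) :=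
    hco1a ▸ ⟨_, (mem_ker _).2 hb, rfl⟩
  let w : triplePullback k B₁ B₂ B₃ B₁₂ B₁₃ B₂₃ p12 p21 p13 p31 p23 p32 :=
    ⟨(w₁, π₂ b, 0), h₁₂, by rw [(mem_ker _).1 hw₁, map_zero], by rw [hb, map_zero]⟩
  have hbw : b - w ∈ ker π₂ := (mem_ker _).2 (by rw [map_sub, sub_eq_zero]; rfl)
  have hw₃ : w ∈ ker π₃ := (mem_ker _).2 rfl
  simpa using add_mem (mem_sup_left hbw) (mem_sup_right hw₃)

end TriplePullback

theorem eta_maps_wellDefined_surjective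
    -- the family consists of epimorphisms:
    (h12 : Function.Surjective p12) (h21 : Function.Surjective p21)
    (h13 : Function.Surjective p13) (h31 : Function.Surjective p31)
    (h23 : Function.Surjective p23) (h32 : Function.Surjective p32)
    -- cocycle condition, part (1): `π^i_j(ker π^i_k) = π^j_i(ker π^j_k)`:
    (hco1a : p12 '' (TwoSidedIdeal.ker p13 : Set B₁) =
             p21 '' (TwoSidedIdeal.ker p23 : Set B₂))
    (hco1b : p13 '' (TwoSidedIdeal.ker p12 : Set B₁) =
             p31 '' (TwoSidedIdeal.ker p32 : Set B₃))
    (hco1c : p23 '' (TwoSidedIdeal.ker p21 : Set B₂) =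
             p32 '' (TwoSidedIdeal.ker p31 : Set B₃))
    -- cocycle condition, part (2): `φ^{ik}_j = φ^{ij}_k ∘ φ^{jk}_i`, elementwise,
    -- for all six ordered triples `(i,j,k)` of distinct indices:
    (hco2a : ∀ (a₁ : B₁) (a₂ : B₂) (a₃ : B₃),
      p12 a₁ - p21 a₂ ∈ p12 '' (TwoSidedIdeal.ker p13 : Set B₁) →
      p23 a₂ - p32 a₃ ∈ p23 '' (TwoSidedIdeal.ker p21 : Set B₂) →
      p13 a₁ - p31 a₃ ∈ p13 '' (TwoSidedIdeal.ker p12 : Set B₁))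
    (hco2c : ∀ (a₁ : B₁) (a₂ : B₂) (a₃ : B₃),
      p21 a₂ - p12 a₁ ∈ p21 '' (TwoSidedIdeal.ker p23 : Set B₂) →
      p13 a₁ - p31 a₃ ∈ p13 '' (TwoSidedIdeal.ker p12 : Set B₁) →
      p23 a₂ - p32 a₃ ∈ p23 '' (TwoSidedIdeal.ker p21 : Set B₂)) :
    -- Conclusion.  Writing `I₁, I₂, I₃` for the kernels of the projections,
    -- `π₁₃ := π^1_3 ∘ π₁` and `π₂₃ := π^2_3 ∘ π₂` are surjective, and there are
    -- well-defined surjective homomorphisms `η¹ : B₁₃ → B^π/(I₁+I₂+I₃)` and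
    -- `η² : B₂₃ → B^π/(I₁+I₂+I₃)` with `η^i(π^i_3(π_i(b̃))) = b̃ + (I₁+I₂+I₃)` for
    -- every lift `b̃ ∈ B^π` (so the value is independent of the choice of lift), and
    -- `η¹ ∘ π₁₃ = η² ∘ π₂₃` is the canonical quotient map.
    letI Bπ := triplePullback k B₁ B₂ B₃ B₁₂ B₁₃ B₂₃ p12 p21 p13 p31 p23 p32
    letI I₁ := TwoSidedIdeal.ker (tpProj₁ k B₁ B₂ B₃ B₁₂ B₁₃ B₂₃ p12 p21 p13 p31 p23 p32)
    letI I₂ := TwoSidedIdeal.ker (tpProj₂ k B₁ B₂ B₃ B₁₂ B₁₃ B₂₃ p12 p21 p13 p31 p23 p32)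
    letI I₃ := TwoSidedIdeal.ker (tpProj₃ k B₁ B₂ B₃ B₁₂ B₁₃ B₂₃ p12 p21 p13 p31 p23 p32)
    -- (i) `π₁₃` and `π₂₃` are surjective:
    Function.Surjective
      (p13.comp (tpProj₁ k B₁ B₂ B₃ B₁₂ B₁₃ B₂₃ p12 p21 p13 p31 p23 p32)) ∧
    Function.Surjective
      (p23.comp (tpProj₂ k B₁ B₂ B₃ B₁₂ B₁₃ B₂₃ p12 p21 p13 p31 p23 p32)) ∧
    -- (ii) and (iii):
    ∃ (η₁ : B₁₃ →ₐ[k] ((I₁ ⊔ I₂) ⊔ I₃).ringCon.Quotient)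
      (η₂ : B₂₃ →ₐ[k] ((I₁ ⊔ I₂) ⊔ I₃).ringCon.Quotient),
      -- `η¹(π^1_3(π₁(b̃))) = b̃ + (I₁+I₂+I₃)` for every lift `b̃`, i.e. `η¹` is
      -- well defined by the formula of the corollary, and
      -- `η¹ ∘ π₁₃` is the canonical quotient map:
      (∀ b : Bπ,
        η₁ (p13 (tpProj₁ k B₁ B₂ B₃ B₁₂ B₁₃ B₂₃ p12 p21 p13 p31 p23 p32 b)) =
          ((I₁ ⊔ I₂) ⊔ I₃).ringCon.mk' b) ∧
      Function.Surjective η₁ ∧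
      -- likewise for `η²`:
      (∀ b : Bπ,
        η₂ (p23 (tpProj₂ k B₁ B₂ B₃ B₁₂ B₁₃ B₂₃ p12 p21 p13 p31 p23 p32 b)) =
          ((I₁ ⊔ I₂) ⊔ I₃).ringCon.mk' b) ∧
      Function.Surjective η₂ := by
  have hπ₁₃ : Surjective (p13.comp (tpProj₁ k B₁ B₂ B₃ B₁₂ B₁₃ B₂₃ p12 p21 p13 p31 p23 p32)) :=
    h13.comp (tpProj₁_surjective h21 h31 hco1c hco2c)
  have hπ₂₃ : Surjective (p23.comp (tpProj₂ k B₁ B₂ B₃ B₁₂ B₁₃ B₂₃ p12 p21 p13 p31 p23 p32)) :=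
    h23.comp (tpProj₂_surjective h12 h32 hco1b hco2a)
  refine ⟨hπ₁₃, hπ₂₃, _, _,
    AlgHom.descendOfSurjective_apply _ hπ₁₃ _ ?ker₁,
    AlgHom.descendOfSurjective_surjective _ hπ₁₃ _ ?ker₁ (RingCon.mkₐ_surjective _),
    AlgHom.descendOfSurjective_apply _ hπ₂₃ _ ?ker₂,
    AlgHom.descendOfSurjective_surjective _ hπ₂₃ _ ?ker₂ (RingCon.mkₐ_surjective _)⟩
  case ker₁ =>
    exact ((ker_comp_tpProj₁_le hco1a).trans (sup_le_sup_right le_sup_left _)).trans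
      (ker_ringCon_mk' _).ge
  case ker₂ =>
    exact ((ker_comp_tpProj₂_le hco1a).trans (sup_le_sup_right le_sup_right _)).trans
      (ker_ringCon_mk' _).ge
end
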